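/- arXiv:math/0405348 — 4 statements merged into one kernel-verified Lean document; each statement's English description precedes it below -/
import Mathlib

section
/- Let X, Z, W be positive real numbers. Then the matrix M = E(Z,W)·T(X) is upper-triangular totally positive: all entries of M on or above the main diagonal are positive, all entries below the diagonal are zero, every minor of M (of any size) is nonnegative, and the determinant of M is positive. Similarly, the matrix N = E(Z,W)·T(X)⁻¹ is lower-triangular totally positive: all entries of N on or below the main diagonal are positive, all entries above the diagonal are zero, every minor of N is nonnegative, and det N is positive. -/
/-- The matrix `T(X)` with rows `(0,0,1)`, `(0,-1,-1)`, `(X, 1+X, 1)`. -/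
def Tmat (X : ℝ) : Matrix (Fin 3) (Fin 3) ℝ :=
  !![0, 0, 1; 0, -1, -1; X, 1 + X, 1]

/-- The matrix `E(Z,W)` with rows `(0,0,Z⁻¹)`, `(0,-1,0)`, `(W,0,0)`. -/
noncomputable def Emat (Z W : ℝ) : Matrix (Fin 3) (Fin 3) ℝ :=
  !![0, 0, Z⁻¹; 0, -1, 0; W, 0, 0]

lemma minors_of_fin3 (A : Matrix (Fin 3) (Fin 3) ℝ)
    (h1 : ∀ i j, 0 ≤ A i j)
    (h2 : ∀ r c : Fin 2 → Fin 3, StrictMono r → StrictMono c → 0 ≤ (A.submatrix r c).det)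
    (h3 : 0 ≤ A.det) :
    ∀ (k : ℕ) (r c : Fin k → Fin 3), StrictMono r → StrictMono c →
      0 ≤ (A.submatrix r c).det := by
  intro k r c hr hc
  have hk : k ≤ 3 := by
    have := Fintype.card_le_of_injective r hr.injective
    simpa using this
  interval_cases k
  · simp [Matrix.det_fin_zero]
  · simp only [Matrix.det_fin_one, Matrix.submatrix_apply]; exact h1 _ _
  · exact h2 r c hr hc
  · have hid : ∀ (f : Fin 3 → Fin 3), StrictMono f → f = id := by
      intro f hf
      have h01 : f 0 < f 1 := hf (by decide)
      have h12 : f 1 < f 2 := hf (by decide)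
      funext i
      fin_cases i <;> simp <;> omega
    rw [hid r hr, hid c hc, Matrix.submatrix_id_id]
    exact h3

/-- For positive reals `X, Z, W`, the matrix `M = E(Z,W)·T(X)` is upper-triangular totally
positive and `N = E(Z,W)·T(X)⁻¹` is lower-triangular totally positive: the entries on the
relevant side of the diagonal are positive, the others vanish, every minor is nonnegative,
and the determinant is positive. -/
theorem Emat_mul_Tmat_totally_positive (X Z W : ℝ) (hX : 0 < X) (hZ : 0 < Z) (hW : 0 < W) :
    (∀ i j : Fin 3, i ≤ j → 0 < (Emat Z W * Tmat X) i j) ∧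
    (∀ i j : Fin 3, j < i → (Emat Z W * Tmat X) i j = 0) ∧
    (∀ (k : ℕ) (r c : Fin k → Fin 3), StrictMono r → StrictMono c →
      0 ≤ ((Emat Z W * Tmat X).submatrix r c).det) ∧
    0 < (Emat Z W * Tmat X).det ∧
    (∀ i j : Fin 3, j ≤ i → 0 < (Emat Z W * (Tmat X)⁻¹) i j) ∧
    (∀ i j : Fin 3, i < j → (Emat Z W * (Tmat X)⁻¹) i j = 0) ∧
    (∀ (k : ℕ) (r c : Fin k → Fin 3), StrictMono r → StrictMono c →
      0 ≤ ((Emat Z W * (Tmat X)⁻¹).submatrix r c).det) ∧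
    0 < (Emat Z W * (Tmat X)⁻¹).det := by
  have hX0 : X ≠ 0 := hX.ne'
  have hZ0 : (0:ℝ) < Z⁻¹ := inv_pos.2 hZ
  have hXi : (0:ℝ) < X⁻¹ := inv_pos.2 hX
  have hM : Emat Z W * Tmat X = !![X*Z⁻¹, Z⁻¹ + X*Z⁻¹, Z⁻¹; 0, 1, 1; 0, 0, W] := by
    ext i j
    fin_cases i <;> fin_cases j <;>
      simp [Emat, Tmat, Matrix.mul_apply, Fin.sum_univ_three, Matrix.vecHead, Matrix.vecTail] <;> ring_nf
  have hTinv : (Tmat X)⁻¹ = !![1, X⁻¹ + 1, X⁻¹; -1, -1, 0; 1, 0, 0] := by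
    apply Matrix.inv_eq_right_inv
    ext i j
    fin_cases i <;> fin_cases j <;>
      simp [Tmat, Matrix.mul_apply, Fin.sum_univ_three, Matrix.vecHead, Matrix.vecTail] <;> field_simp <;> ring_nf
  have hN : Emat Z W * (Tmat X)⁻¹ = !![Z⁻¹, 0, 0; 1, 1, 0; W, W + W*X⁻¹, W*X⁻¹] := by
    rw [hTinv]
    ext i j
    fin_cases i <;> fin_cases j <;>
      simp [Emat, Matrix.mul_apply, Fin.sum_univ_three, Matrix.vecHead, Matrix.vecTail] <;> ring_nf
  rw [hM, hN]
  clear hM hN hTinv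
  refine ⟨?_, ?_, ?_, ?_, ?_, ?_, ?_, ?_⟩
  · intro i j hij
    fin_cases i <;> fin_cases j <;>
      simp [Matrix.vecHead, Matrix.vecTail] <;>
      first | positivity | exact absurd hij (by decide)
  · intro i j hij
    fin_cases i <;> fin_cases j <;>
      first | exact absurd hij (by decide) | simp [Matrix.vecHead, Matrix.vecTail]
  · apply minors_of_fin3
    · intro i j
      fin_cases i <;> fin_cases j <;>
        simp [Matrix.vecHead, Matrix.vecTail] <;> positivity
    · intro r c hr hc
      have hr01 : r 0 < r 1 := hr (by decide)
      have hc01 : c 0 < c 1 := hc (by decide)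
      have er0 : r 0 = 0 ∨ r 0 = 1 ∨ r 0 = 2 := by omega
      have er1 : r 1 = 0 ∨ r 1 = 1 ∨ r 1 = 2 := by omega
      have ec0 : c 0 = 0 ∨ c 0 = 1 ∨ c 0 = 2 := by omega
      have ec1 : c 1 = 0 ∨ c 1 = 1 ∨ c 1 = 2 := by omega
      rcases er0 with h|h|h <;> rcases er1 with h'|h'|h' <;>
        rcases ec0 with g|g|g <;> rcases ec1 with g'|g'|g' <;>
        first
          | omega
          | (rw [Matrix.det_fin_two]; simp only [Matrix.submatrix_apply, h, h', g, g'];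
             simp [Matrix.vecHead, Matrix.vecTail]; try (ring_nf; positivity))
    · simp [Matrix.det_fin_three, Matrix.vecHead, Matrix.vecTail]
      positivity
  · simp [Matrix.det_fin_three, Matrix.vecHead, Matrix.vecTail]
    positivity
  · intro i j hij
    fin_cases i <;> fin_cases j <;>
      simp [Matrix.vecHead, Matrix.vecTail] <;>
      first | positivity | exact absurd hij (by decide)
  · intro i j hij
    fin_cases i <;> fin_cases j <;>
      first | exact absurd hij (by decide) | simp [Matrix.vecHead, Matrix.vecTail]
  · apply minors_of_fin3
    · intro i j
      fin_cases i <;> fin_cases j <;>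
        simp [Matrix.vecHead, Matrix.vecTail] <;> positivity
    · intro r c hr hc
      have hr01 : r 0 < r 1 := hr (by decide)
      have hc01 : c 0 < c 1 := hc (by decide)
      have er0 : r 0 = 0 ∨ r 0 = 1 ∨ r 0 = 2 := by omega
      have er1 : r 1 = 0 ∨ r 1 = 1 ∨ r 1 = 2 := by omega
      have ec0 : c 0 = 0 ∨ c 0 = 1 ∨ c 0 = 2 := by omega
      have ec1 : c 1 = 0 ∨ c 1 = 1 ∨ c 1 = 2 := by omega
      rcases er0 with h|h|h <;> rcases er1 with h'|h'|h' <;>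
        rcases ec0 with g|g|g <;> rcases ec1 with g'|g'|g' <;>
        first
          | omega
          | (rw [Matrix.det_fin_two]; simp only [Matrix.submatrix_apply, h, h', g, g'];
             simp [Matrix.vecHead, Matrix.vecTail]; try (ring_nf; positivity))
    · simp [Matrix.det_fin_three, Matrix.vecHead, Matrix.vecTail]
      positivity
  · simp [Matrix.det_fin_three, Matrix.vecHead, Matrix.vecTail]
    positivity
end

section
/- Let n ≥ 2, let X₁,…,Xₙ, Z₁,…,Zₙ, W₁,…,Wₙ be positive real numbers, and let σ : {1,…,n} → {+1,−1} be a choice of signs taking both values +1 and −1. Set Mᵢ = E(Zᵢ,Wᵢ)·T(Xᵢ) if σ(i)=+1 and Mᵢ = E(Zᵢ,Wᵢ)·T(Xᵢ)⁻¹ if σ(i)=−1. Then the product M₁·M₂·⋯·Mₙ is conjugate in GL₃(ℝ) to a totally positive matrix, i.e. to a 3×3 real matrix all of whose entries, all of whose 2×2 minors, and whose determinant are positive. -/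
open Matrix

/-- A 3×3 real matrix is totally positive: all entries, all 2×2 minors and the
determinant are positive. -/
def TotallyPositive (P : Matrix (Fin 3) (Fin 3) ℝ) : Prop :=
  (∀ i j : Fin 3, 0 < P i j) ∧
  (∀ r c : Fin 2 → Fin 3, StrictMono r → StrictMono c → 0 < (P.submatrix r c).det) ∧
  0 < P.det

/-
Each factor `E(Z,W) T(X)` is upper triangular and each `E(Z,W) T(X)⁻¹` lower triangular; both
are totally nonnegative with positive determinant. An upper factor immediately followed by a
lower one is totally positive: in the Cauchy–Binet expansion of any `2 × 2` minor of the
product, the term through the last two rows/columns is positive and the others are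
nonnegative. Since `σ` takes both values, some cyclic rotation of the word starts with such a
pair, and cyclic rotation of a product of invertible matrices is a conjugation. Finally,
multiplying a totally positive matrix on the right by a totally nonnegative matrix of positive
determinant keeps it totally positive, again by Cauchy–Binet.
-/

def increasingPairs : Finset (Fin 2 → Fin 3) := {![0, 1], ![0, 2], ![1, 2]}

theorem mem_increasingPairs {k : Fin 2 → Fin 3} : k ∈ increasingPairs ↔ StrictMono k := by
  revert k; decide

theorem forall_strictMono_fin_two_fin_three {p : (Fin 2 → Fin 3) → Prop} :
    (∀ r, StrictMono r → p r) ↔ p ![0, 1] ∧ p ![0, 2] ∧ p ![1, 2] := by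
  simp only [← mem_increasingPairs, increasingPairs, Finset.mem_insert, Finset.mem_singleton,
    forall_eq_or_imp, forall_eq]

theorem det_submatrix_mul_fin_three {R : Type*} [CommRing R] (A B : Matrix (Fin 3) (Fin 3) R)
    (r c : Fin 2 → Fin 3) :
    ((A * B).submatrix r c).det =
      ∑ k ∈ increasingPairs, (A.submatrix r k).det * (B.submatrix k c).det := by
  rw [increasingPairs, Finset.sum_insert (by decide), Finset.sum_insert (by decide),
    Finset.sum_singleton]
  simp only [det_fin_two, submatrix_apply, mul_apply, Fin.sum_univ_three, cons_val_zero,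
    cons_val_one, cons_val_fin_one]
  ring

theorem det_eq_zero_of_det_submatrix_eq_zero {R : Type*} [CommRing R]
    (A : Matrix (Fin 3) (Fin 3) R) {c : Fin 2 → Fin 3} (hc : StrictMono c)
    (h : ∀ k ∈ increasingPairs, (A.submatrix k c).det = 0) : A.det = 0 := by
  rw [← mem_increasingPairs] at hc
  simp only [increasingPairs, Finset.mem_insert, Finset.mem_singleton, forall_eq_or_imp,
    forall_eq] at hc h
  obtain ⟨h01, h02, h12⟩ := h
  simp only [det_fin_two, submatrix_apply] at h01 h02 h12
  rw [det_fin_three]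
  rcases hc with rfl | rfl | rfl <;>
    simp only [cons_val_zero, cons_val_one, cons_val_fin_one] at h01 h02 h12
  -- Laplace expansion along the column outside `c`, whose cofactors are the vanishing minors.
  · linear_combination A 0 2 * h12 - A 1 2 * h02 + A 2 2 * h01
  · linear_combination -A 0 1 * h12 + A 1 1 * h02 - A 2 1 * h01
  · linear_combination A 0 0 * h12 - A 1 0 * h02 + A 2 0 * h01

def TotallyNonneg (A : Matrix (Fin 3) (Fin 3) ℝ) : Prop :=
  (∀ i j : Fin 3, 0 ≤ A i j) ∧
  (∀ r c : Fin 2 → Fin 3, StrictMono r → StrictMono c → 0 ≤ (A.submatrix r c).det) ∧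
  0 ≤ A.det

theorem TotallyPositive.mul_totallyNonneg {P A : Matrix (Fin 3) (Fin 3) ℝ}
    (hP : TotallyPositive P) (hA : TotallyNonneg A) (hAdet : 0 < A.det) :
    TotallyPositive (P * A) := by
  obtain ⟨hPent, hPmin, hPdet⟩ := hP
  obtain ⟨hAent, hAmin, -⟩ := hA
  refine ⟨fun i j => ?_, fun r c hr hc => ?_, by rw [det_mul]; positivity⟩
  · obtain ⟨k, hk⟩ : ∃ k, A k j ≠ 0 := by
      by_contra! h
      exact hAdet.ne' (det_eq_zero_of_column_eq_zero j h)
    rw [mul_apply]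
    exact Finset.sum_pos' (fun k _ => mul_nonneg (hPent i k).le (hAent k j))
      ⟨k, Finset.mem_univ _, mul_pos (hPent i k) ((hAent k j).lt_of_ne' hk)⟩
  · obtain ⟨k, hk, hkc⟩ : ∃ k ∈ increasingPairs, (A.submatrix k c).det ≠ 0 := by
      by_contra! h
      exact hAdet.ne' (det_eq_zero_of_det_submatrix_eq_zero A hc h)
    have hmono : ∀ k ∈ increasingPairs, StrictMono k := fun k => mem_increasingPairs.1
    rw [det_submatrix_mul_fin_three]
    exact Finset.sum_pos'
      (fun k hk => mul_nonneg (hPmin r k hr (hmono k hk)).le (hAmin k c (hmono k hk) hc))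
      ⟨k, hk, mul_pos (hPmin r k hr (hmono k hk)) ((hAmin k c (hmono k hk) hc).lt_of_ne' hkc)⟩

theorem TotallyPositive.mul_list_prod {P : Matrix (Fin 3) (Fin 3) ℝ} (hP : TotallyPositive P)
    {l : List (Matrix (Fin 3) (Fin 3) ℝ)} (hl : ∀ A ∈ l, TotallyNonneg A ∧ 0 < A.det) :
    TotallyPositive (P * l.prod) := by
  induction l generalizing P with
  | nil => simpa using hP
  | cons A l ih =>
    rw [List.prod_cons, ← mul_assoc]
    obtain ⟨hA, hAdet⟩ := hl A List.mem_cons_self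
    exact ih (hP.mul_totallyNonneg hA hAdet) fun B hB => hl B (List.mem_cons_of_mem A hB)

theorem TotallyNonneg.totallyPositive_mul {A B : Matrix (Fin 3) (Fin 3) ℝ}
    (hA : TotallyNonneg A) (hB : TotallyNonneg B) (hAdet : 0 < A.det) (hBdet : 0 < B.det)
    (hAcol : ∀ i, 0 < A i 2) (hBrow : ∀ j, 0 < B 2 j)
    (hAmin : ∀ r, StrictMono r → 0 < (A.submatrix r ![1, 2]).det)
    (hBmin : ∀ c, StrictMono c → 0 < (B.submatrix ![1, 2] c).det) :
    TotallyPositive (A * B) := by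
  obtain ⟨hAent, hAmin', -⟩ := hA
  obtain ⟨hBent, hBmin', -⟩ := hB
  have hmono : ∀ k ∈ increasingPairs, StrictMono k := fun k => mem_increasingPairs.1
  refine ⟨fun i j => ?_, fun r c hr hc => ?_, by rw [det_mul]; positivity⟩
  · rw [mul_apply]
    exact Finset.sum_pos' (fun k _ => mul_nonneg (hAent i k) (hBent k j))
      ⟨2, Finset.mem_univ _, mul_pos (hAcol i) (hBrow j)⟩
  · rw [det_submatrix_mul_fin_three]
    exact Finset.sum_pos'
      (fun k hk => mul_nonneg (hAmin' r k hr (hmono k hk)) (hBmin' k c (hmono k hk) hc))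
      ⟨![1, 2], by decide, mul_pos (hAmin r hr) (hBmin c hc)⟩

theorem Emat_mul_Tmat (X Z W : ℝ) :
    Emat Z W * Tmat X = !![Z⁻¹ * X, Z⁻¹ * (1 + X), Z⁻¹; 0, 1, 1; 0, 0, W] := by
  rw [Emat, Tmat, mul_fin_three]
  congr 1
  ring_nf

theorem Tmat_inv {X : ℝ} (hX : X ≠ 0) :
    (Tmat X)⁻¹ = !![1, 1 + X⁻¹, X⁻¹; -1, -1, 0; 1, 0, 0] := by
  refine inv_eq_right_inv ?_
  rw [Tmat, mul_fin_three, one_fin_three]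
  congr 1
  ring_nf
  rw [mul_inv_cancel₀ hX, neg_add_cancel]

theorem Emat_mul_Tmat_inv {X : ℝ} (hX : X ≠ 0) (Z W : ℝ) :
    Emat Z W * (Tmat X)⁻¹ = !![Z⁻¹, 0, 0; 1, 1, 0; W, W * (1 + X⁻¹), W * X⁻¹] := by
  rw [Tmat_inv hX, Emat, mul_fin_three]
  congr 1
  ring_nf

section
variable {X Z W : ℝ}

theorem totallyNonneg_Emat_mul_Tmat (hX : 0 < X) (hZ : 0 < Z) (hW : 0 < W) :
    TotallyNonneg (Emat Z W * Tmat X) := by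
  rw [Emat_mul_Tmat]
  refine ⟨fun i j => ?_, ?_, ?_⟩
  · fin_cases i <;> fin_cases j <;>
      simp only [Fin.zero_eta, Fin.mk_one, Fin.reduceFinMk, of_apply, cons_val', cons_val,
        cons_val_zero, cons_val_one, cons_val_fin_one] <;> positivity
  · simp only [← imp_forall_iff, forall_strictMono_fin_two_fin_three, det_fin_two,
      submatrix_apply, of_apply, cons_val', cons_val, cons_val_zero, cons_val_one, cons_val_fin_one]
    ring_nf
    and_intros <;> positivity
  · simp only [det_fin_three, of_apply, cons_val', cons_val, cons_val_zero, cons_val_one,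
      cons_val_fin_one]
    ring_nf
    positivity

theorem det_Emat_mul_Tmat_pos (hX : 0 < X) (hZ : 0 < Z) (hW : 0 < W) :
    0 < (Emat Z W * Tmat X).det := by
  simp only [Emat_mul_Tmat, det_fin_three, of_apply, cons_val', cons_val, cons_val_zero,
    cons_val_one, cons_val_fin_one]
  ring_nf
  positivity

theorem Emat_mul_Tmat_apply_two_pos (hZ : 0 < Z) (hW : 0 < W) (i : Fin 3) :
    0 < (Emat Z W * Tmat X) i 2 := by
  rw [Emat_mul_Tmat]
  fin_cases i <;>
    simp only [Fin.zero_eta, Fin.mk_one, Fin.reduceFinMk, of_apply, cons_val', cons_val,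
      cons_val_zero, cons_val_one, cons_val_fin_one] <;> positivity

theorem det_Emat_mul_Tmat_submatrix_pos (hX : 0 < X) (hZ : 0 < Z) (hW : 0 < W)
    {r : Fin 2 → Fin 3} (hr : StrictMono r) :
    0 < ((Emat Z W * Tmat X).submatrix r ![1, 2]).det := by
  revert r
  simp only [forall_strictMono_fin_two_fin_three, Emat_mul_Tmat, det_fin_two, submatrix_apply,
    of_apply, cons_val', cons_val, cons_val_zero, cons_val_one, cons_val_fin_one]
  ring_nf
  and_intros <;> positivity

theorem totallyNonneg_Emat_mul_Tmat_inv (hX : 0 < X) (hZ : 0 < Z) (hW : 0 < W) :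
    TotallyNonneg (Emat Z W * (Tmat X)⁻¹) := by
  rw [Emat_mul_Tmat_inv hX.ne']
  refine ⟨fun i j => ?_, ?_, ?_⟩
  · fin_cases i <;> fin_cases j <;>
      simp only [Fin.zero_eta, Fin.mk_one, Fin.reduceFinMk, of_apply, cons_val', cons_val,
        cons_val_zero, cons_val_one, cons_val_fin_one] <;> positivity
  · simp only [← imp_forall_iff, forall_strictMono_fin_two_fin_three, det_fin_two,
      submatrix_apply, of_apply, cons_val', cons_val, cons_val_zero, cons_val_one, cons_val_fin_one]
    ring_nf
    and_intros <;> positivity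
  · simp only [det_fin_three, of_apply, cons_val', cons_val, cons_val_zero, cons_val_one,
      cons_val_fin_one]
    ring_nf
    positivity

theorem det_Emat_mul_Tmat_inv_pos (hX : 0 < X) (hZ : 0 < Z) (hW : 0 < W) :
    0 < (Emat Z W * (Tmat X)⁻¹).det := by
  simp only [Emat_mul_Tmat_inv hX.ne', det_fin_three, of_apply, cons_val', cons_val,
    cons_val_zero, cons_val_one, cons_val_fin_one]
  ring_nf
  positivity

theorem Emat_mul_Tmat_inv_two_apply_pos (hX : 0 < X) (hW : 0 < W) (j : Fin 3) :
    0 < (Emat Z W * (Tmat X)⁻¹) 2 j := by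
  rw [Emat_mul_Tmat_inv hX.ne']
  fin_cases j <;>
    simp only [Fin.zero_eta, Fin.mk_one, Fin.reduceFinMk, of_apply, cons_val', cons_val,
      cons_val_zero, cons_val_one, cons_val_fin_one] <;> positivity

theorem det_Emat_mul_Tmat_inv_submatrix_pos (hX : 0 < X) (hW : 0 < W)
    {c : Fin 2 → Fin 3} (hc : StrictMono c) :
    0 < ((Emat Z W * (Tmat X)⁻¹).submatrix ![1, 2] c).det := by
  revert c
  simp only [forall_strictMono_fin_two_fin_three, Emat_mul_Tmat_inv hX.ne', det_fin_two,
    submatrix_apply, of_apply, cons_val', cons_val, cons_val_zero, cons_val_one, cons_val_fin_one]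
  ring_nf
  and_intros <;> positivity

theorem totallyPositive_Emat_mul_Tmat_mul_Emat_mul_Tmat_inv {X' Z' W' : ℝ}
    (hX : 0 < X) (hZ : 0 < Z) (hW : 0 < W) (hX' : 0 < X') (hZ' : 0 < Z') (hW' : 0 < W') :
    TotallyPositive (Emat Z W * Tmat X * (Emat Z' W' * (Tmat X')⁻¹)) :=
  (totallyNonneg_Emat_mul_Tmat hX hZ hW).totallyPositive_mul
    (totallyNonneg_Emat_mul_Tmat_inv hX' hZ' hW') (det_Emat_mul_Tmat_pos hX hZ hW)
    (det_Emat_mul_Tmat_inv_pos hX' hZ' hW') (Emat_mul_Tmat_apply_two_pos hZ hW)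
    (Emat_mul_Tmat_inv_two_apply_pos hX' hW')
    (fun _ => det_Emat_mul_Tmat_submatrix_pos hX hZ hW)
    (fun _ => det_Emat_mul_Tmat_inv_submatrix_pos hX' hW')

end

theorem List.exists_cons_eq_append_cons_cons {α : Type*} {p : α → Prop} {x : α} {l : List α}
    (hx : p x) (hl : ∃ y ∈ l, ¬ p y) :
    ∃ a u v b, x :: l = a ++ u :: v :: b ∧ p u ∧ ¬ p v := by
  induction l generalizing x with
  | nil => simp at hl
  | cons y l ih =>
    by_cases hy : p y
    · obtain ⟨a, u, v, b, h, hu, hv⟩ :=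
        ih hy (by simpa [hy] using hl)
      exact ⟨x :: a, u, v, b, by rw [h, List.cons_append], hu, hv⟩
    · exact ⟨[], x, y, l, rfl, hx, hy⟩

theorem List.exists_isRotated_cons_cons {α : Type*} {p : α → Prop} {l : List α}
    (hp : ∃ x ∈ l, p x) (hnp : ∃ y ∈ l, ¬ p y) :
    ∃ u v t, l ~r u :: v :: t ∧ p u ∧ ¬ p v := by
  obtain ⟨x, hxl, hx⟩ := hp
  obtain ⟨s, t, rfl⟩ := List.append_of_mem hxl
  have hrot : s ++ x :: t ~r x :: (t ++ s) := List.isRotated_append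
  obtain ⟨y, hyl, hy⟩ := hnp
  have hyts : y ∈ t ++ s :=
    (List.mem_cons.1 (hrot.mem_iff.1 hyl)).resolve_left fun hyx => hy (hyx ▸ hx)
  obtain ⟨a, u, v, b, hab, hu, hv⟩ := List.exists_cons_eq_append_cons_cons hx ⟨y, hyts, hy⟩
  exact ⟨u, v, b ++ a, hrot.trans (hab ▸ List.isRotated_append), hu, hv⟩

theorem List.IsRotated.isConj_prod {M : Type*} [Monoid M] {l l' : List M} (h : l ~r l')
    (hl : ∀ x ∈ l, IsUnit x) : IsConj l.prod l'.prod := by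
  obtain ⟨n, rfl⟩ := h
  rw [List.rotate_eq_drop_append_take_mod, List.prod_append]
  conv_lhs => rw [← List.take_append_drop (n % l.length) l, List.prod_append]
  have hdrop : IsUnit (l.drop (n % l.length)).prod :=
    List.prod_isUnit fun x hx => hl x (List.mem_of_mem_drop hx)
  exact ⟨hdrop.unit, (mul_assoc _ _ _).symm⟩

theorem prod_conjugate_totallyPositive_general (n : ℕ)
    (X Z W : Fin n → ℝ) (hX : ∀ i, 0 < X i) (hZ : ∀ i, 0 < Z i) (hW : ∀ i, 0 < W i)
    (σ : Fin n → Bool) (hσt : ∃ i, σ i = true) (hσf : ∃ i, σ i = false) :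
    letI M : Fin n → Matrix (Fin 3) (Fin 3) ℝ :=
      fun i => if σ i then Emat (Z i) (W i) * Tmat (X i)
               else Emat (Z i) (W i) * (Tmat (X i))⁻¹
    ∃ g : GL (Fin 3) ℝ,
      TotallyPositive ((g : Matrix (Fin 3) (Fin 3) ℝ) * (List.ofFn M).prod *
        ((g⁻¹ : GL (Fin 3) ℝ) : Matrix (Fin 3) (Fin 3) ℝ)) := by
  set M : Fin n → Matrix (Fin 3) (Fin 3) ℝ := fun i =>
    if σ i then Emat (Z i) (W i) * Tmat (X i) else Emat (Z i) (W i) * (Tmat (X i))⁻¹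
  have hM : ∀ i, TotallyNonneg (M i) ∧ 0 < (M i).det := fun i => by
    by_cases hi : σ i <;> simp only [M, hi]
    exacts [⟨totallyNonneg_Emat_mul_Tmat (hX i) (hZ i) (hW i),
        det_Emat_mul_Tmat_pos (hX i) (hZ i) (hW i)⟩,
      ⟨totallyNonneg_Emat_mul_Tmat_inv (hX i) (hZ i) (hW i),
        det_Emat_mul_Tmat_inv_pos (hX i) (hZ i) (hW i)⟩]
  obtain ⟨i, j, t, hrot, hi, hj⟩ := List.exists_isRotated_cons_cons (p := fun i => σ i = true)
    (l := List.finRange n) (hσt.imp fun i h => ⟨List.mem_finRange i, h⟩)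
    (hσf.imp fun i h => ⟨List.mem_finRange i, by simp [h]⟩)
  obtain ⟨g, hg⟩ : IsConj (List.ofFn M).prod (M i * M j * (t.map M).prod) := by
    simpa [List.ofFn_eq_map, mul_assoc] using (hrot.map M).isConj_prod fun A hA => by
      obtain ⟨k, -, rfl⟩ := List.mem_map.1 hA
      exact (isUnit_iff_isUnit_det _).2 (hM k).2.ne'.isUnit
  refine ⟨g, ?_⟩
  rw [hg.eq, Units.mul_inv_cancel_right]
  refine TotallyPositive.mul_list_prod ?_ fun A hA => ?_
  · rw [show M i = _ from if_pos hi, show M j = _ from if_neg hj]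
    exact totallyPositive_Emat_mul_Tmat_mul_Emat_mul_Tmat_inv (hX i) (hZ i) (hW i) (hX j) (hZ j)
      (hW j)
  · obtain ⟨k, -, rfl⟩ := List.mem_map.1 hA
    exact hM k

/-- Let `n ≥ 2`, let `Xᵢ, Zᵢ, Wᵢ` be positive reals and let `σ` be a choice of signs taking
both values.  Set `Mᵢ = E(Zᵢ,Wᵢ)·T(Xᵢ)` if `σ i` and `Mᵢ = E(Zᵢ,Wᵢ)·T(Xᵢ)⁻¹` otherwise.
Then `M₀ ⋯ M_{n-1}` is conjugate in `GL₃(ℝ)` to a totally positive matrix. -/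
theorem prod_conjugate_totallyPositive (n : ℕ) (hn : 2 ≤ n)
    (X Z W : Fin n → ℝ) (hX : ∀ i, 0 < X i) (hZ : ∀ i, 0 < Z i) (hW : ∀ i, 0 < W i)
    (σ : Fin n → Bool) (hσt : ∃ i, σ i = true) (hσf : ∃ i, σ i = false) :
    letI M : Fin n → Matrix (Fin 3) (Fin 3) ℝ :=
      fun i => if σ i then Emat (Z i) (W i) * Tmat (X i)
               else Emat (Z i) (W i) * (Tmat (X i))⁻¹
    ∃ g : GL (Fin 3) ℝ,
      TotallyPositive ((g : Matrix (Fin 3) (Fin 3) ℝ) * (List.ofFn M).prod *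
        ((g⁻¹ : GL (Fin 3) ℝ) : Matrix (Fin 3) (Fin 3) ℝ)) :=
  prod_conjugate_totallyPositive_general n X Z W hX hZ hW σ hσt hσf
end

section
/- Let I be a finite set, let ε, ε′ : I × I → ℤ be skew-symmetric functions, and fix k ∈ I. Let F = ℝ(Xᵢ : i ∈ I) be the field of rational functions in variables indexed by I, equipped with the Poisson bracket {f,g} = Σ_{a,b∈I} ε_{ab} X_a X_b (∂f/∂X_a)(∂g/∂X_b). Define elements μ_k(i) ∈ F for i ∈ I by: μ_k(i) = Xᵢ(1+X_k)^{−ε_{ik}} if i ≠ k and ε_{ik} ≤ 0; μ_k(i) = Xᵢ(1+X_k⁻¹)^{−ε_{ik}} if ε_{ik} > 0; and μ_k(k) = X_k⁻¹. Then the identity {μ_k(i), μ_k(j)} = ε′_{ij}·μ_k(i)·μ_k(j) holds for all i, j ∈ I if and only if for all i, j ∈ I: ε′_{ij} = −ε_{ij} when k ∈ {i,j}, and ε′_{ij} = ε_{ij} + ε_{ik}·max{0, sgn(ε_{ik})·ε_{kj}} when k ∉ {i,j}. -/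
/-!
Every mutated coordinate is a Laurent monomial in `Xᵢ` and in `1 + X_k` or `1 + X_k⁻¹`, so its
logarithmic gradient `a ↦ X_a ∂_a μ / μ` is `-e_k` for `i = k` and `e_i + c_i e_k` otherwise, with
`c_i = [ε_ik]₊ - ε_ik u` and `u = X_k / (1 + X_k)`. For log-canonical brackets
`{f, g} = f g ε(∇log f, ∇log g)`, so `{μ_k(i), μ_k(j)} = ε(v_i, v_j) μ_k(i) μ_k(j)`. In
`ε(v_i, v_j)` the terms in `u` cancel by skew-symmetry and what remains is the integer
`ε_ij + ε_ik [-ε_kj]₊ + ε_kj [ε_ik]₊`, the mutated exchange matrix. Since `μ_k(i) ≠ 0` and the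
field has characteristic zero, this integer is the only possible coefficient.
-/

theorem Int.mul_max_neg_add_mul_max (x y : ℤ) :
    x * max (-y) 0 + y * max x 0 = x * max 0 (x.sign * y) := by
  rcases lt_trichotomy x 0 with hx | rfl | hx <;> rcases le_total y 0 with hy | hy <;>
    simp [Int.sign_eq_neg_one_iff_neg.mpr, Int.sign_eq_one_iff_pos.mpr, *] <;> grind

section LogGradient

variable {R F I : Type*} [CommRing R] [Field F] [Algebra R F]
  (D : I → Derivation R F F) (X : I → F)

def IsLogGradient (f : F) (v : I → F) : Prop := ∀ a, X a * D a f = f * v a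

variable {D X}

theorem IsLogGradient.mul {f g : F} {u w : I → F} (hf : IsLogGradient D X f u)
    (hg : IsLogGradient D X g w) : IsLogGradient D X (f * g) (u + w) := by
  intro a
  rw [Derivation.leibniz, smul_eq_mul, smul_eq_mul, Pi.add_apply]
  linear_combination f * hg a + g * hf a

theorem IsLogGradient.zpow {f : F} {u : I → F} (hf : IsLogGradient D X f u) (hf₀ : f ≠ 0)
    (n : ℤ) : IsLogGradient D X (f ^ n) ((n : F) • u) := by
  intro a
  rw [Derivation.leibniz_zpow, zpow_sub_one₀ hf₀, zsmul_eq_mul, smul_eq_mul, Pi.smul_apply,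
    smul_eq_mul]
  linear_combination (n : F) * f ^ n * f⁻¹ * hf a + (n : F) * f ^ n * u a * (mul_inv_cancel₀ hf₀)

variable [DecidableEq I] (hD : ∀ a b, D a (X b) = if a = b then 1 else 0)
include hD

theorem isLogGradient_X (i : I) : IsLogGradient D X (X i) (Pi.single i 1) := by
  intro a
  rw [hD, Pi.single_apply]
  split_ifs with h <;> simp [h]

theorem isLogGradient_one_add_X {k : I} (h : 1 + X k ≠ 0) :
    IsLogGradient D X (1 + X k) ((X k / (1 + X k)) • Pi.single k 1) := by
  intro a
  rw [map_add, Derivation.map_one_eq_zero, zero_add, hD, Pi.smul_apply, Pi.single_apply]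
  split_ifs with ha
  · subst ha; rw [smul_eq_mul, mul_one]; field_simp
  · simp

theorem isLogGradient_one_add_inv_X {k : I} (hk : X k ≠ 0) (h : 1 + X k ≠ 0) :
    IsLogGradient D X (1 + (X k)⁻¹) ((X k / (1 + X k) - 1) • Pi.single k 1) := by
  intro a
  rw [map_add, Derivation.map_one_eq_zero, zero_add, Derivation.leibniz_inv, hD, Pi.smul_apply,
    Pi.single_apply]
  split_ifs with ha
  · subst ha; rw [smul_eq_mul, mul_one, smul_eq_mul, mul_one]; field_simp; ring
  · simp

end LogGradient

theorem one_add_inv_ne_zero {F : Type*} [Field F] {x : F} (hx : x ≠ 0) (h : 1 + x ≠ 0) :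
    1 + x⁻¹ ≠ 0 := by
  rw [inv_eq_one_div, one_add_div hx, add_comm]
  exact div_ne_zero h hx

section LogCanonical

variable {R F I : Type*} [CommRing R] [Field F] [Algebra R F] [Fintype I] [DecidableEq I]

def logCanonicalBracket (ε : I → I → ℤ) (D : I → Derivation R F F) (X : I → F) (f g : F) : F :=
  ∑ a, ∑ b, (ε a b : F) * X a * X b * D a f * D b g

def logCanonicalForm (ε : I → I → ℤ) : (I → F) →ₗ[F] (I → F) →ₗ[F] F :=
  Matrix.toLinearMap₂' F (Matrix.of fun a b => (ε a b : F))

theorem logCanonicalBracket_eq_of_isLogGradient {ε : I → I → ℤ} {D : I → Derivation R F F}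
    {X : I → F} {f g : F} {u w : I → F} (hf : IsLogGradient D X f u)
    (hg : IsLogGradient D X g w) :
    logCanonicalBracket ε D X f g = f * g * logCanonicalForm ε u w := by
  simp only [logCanonicalBracket, logCanonicalForm, Matrix.toLinearMap₂'_apply, Matrix.of_apply,
    smul_eq_mul, Finset.mul_sum]
  refine Finset.sum_congr rfl fun a _ => Finset.sum_congr rfl fun b _ => ?_
  linear_combination (ε a b : F) * X b * D b g * hf a + (ε a b : F) * f * u a * hg b

end LogCanonical

section Mutation

variable {R F I : Type*} [CommRing R] [Field F] [Algebra R F] [DecidableEq I]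

def mutationCoord (ε : I → I → ℤ) (X : I → F) (k i : I) : F :=
  if i = k then (X k)⁻¹
  else if 0 < ε i k then X i * (1 + (X k)⁻¹) ^ (-(ε i k))
  else X i * (1 + X k) ^ (-(ε i k))

def mutationLogGradient (ε : I → I → ℤ) (k : I) (u : F) (i : I) : I → F :=
  if i = k then -Pi.single k 1
  else Pi.single i 1 + (((max (ε i k) 0 : ℤ) : F) - ε i k * u) • Pi.single k 1

def matrixMutation (ε : I → I → ℤ) (k : I) (i j : I) : ℤ :=
  if k = i ∨ k = j then -ε i j else ε i j + ε i k * max 0 ((ε i k).sign * ε k j)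

variable {ε : I → I → ℤ} {D : I → Derivation R F F} {X : I → F} {k : I}

theorem isLogGradient_mutationCoord (hD : ∀ a b, D a (X b) = if a = b then 1 else 0)
    (hX : ∀ i, X i ≠ 0) (h1 : 1 + X k ≠ 0) (i : I) :
    IsLogGradient D X (mutationCoord ε X k i) (mutationLogGradient ε k (X k / (1 + X k)) i) := by
  have h1' := one_add_inv_ne_zero (hX k) h1
  unfold mutationCoord mutationLogGradient
  split_ifs with hik hpos
  · simpa using (isLogGradient_X hD k).zpow (hX k) (-1)
  · convert (isLogGradient_X hD i).mul
      ((isLogGradient_one_add_inv_X hD (hX k) h1).zpow h1' (-ε i k)) using 2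
    rw [smul_smul, max_eq_left hpos.le]
    push_cast
    ring_nf
  · convert (isLogGradient_X hD i).mul
      ((isLogGradient_one_add_X hD h1).zpow h1 (-ε i k)) using 2
    rw [smul_smul, max_eq_right (not_lt.mp hpos)]
    push_cast
    ring_nf

theorem mutationCoord_ne_zero (hX : ∀ i, X i ≠ 0) (h1 : 1 + X k ≠ 0) (i : I) :
    mutationCoord ε X k i ≠ 0 := by
  have h1' := one_add_inv_ne_zero (hX k) h1
  unfold mutationCoord
  split_ifs
  · exact inv_ne_zero (hX k)
  · exact mul_ne_zero (hX i) (zpow_ne_zero _ h1')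
  · exact mul_ne_zero (hX i) (zpow_ne_zero _ h1)

variable [Fintype I]

theorem logCanonicalForm_mutationLogGradient (hε : ∀ a b, ε a b = -ε b a) (u : F) (i j : I) :
    logCanonicalForm ε (mutationLogGradient ε k u i) (mutationLogGradient ε k u j) =
      matrixMutation ε k i j := by
  have hkk : ε k k = 0 := by linarith [hε k k]
  have single (a b : I) : logCanonicalForm ε (Pi.single a (1 : F)) (Pi.single b 1) = ε a b := by
    simp [logCanonicalForm, Matrix.toLinearMap₂'_apply']
  simp only [mutationLogGradient, matrixMutation]
  by_cases hi : i = k <;> by_cases hj : j = k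
  · simp [hi, hj, single, hkk]
  · simp [hi, hj, single, hkk, Ne.symm hj]
  · simp [hi, hj, single, hkk, Ne.symm hi]
  · simp only [hi, hj, if_false, map_add, map_smul, LinearMap.add_apply, LinearMap.smul_apply,
      single, hkk, smul_eq_mul, Ne.symm hi, Ne.symm hj, or_self]
    have key := congrArg (Int.cast : ℤ → F) (Int.mul_max_neg_add_mul_max (ε i k) (ε k j))
    rw [hε j k]
    push_cast at key ⊢
    linear_combination key

theorem logCanonicalBracket_mutationCoord (hε : ∀ a b, ε a b = -ε b a)
    (hD : ∀ a b, D a (X b) = if a = b then 1 else 0) (hX : ∀ i, X i ≠ 0) (h1 : 1 + X k ≠ 0)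
    (i j : I) :
    logCanonicalBracket ε D X (mutationCoord ε X k i) (mutationCoord ε X k j) =
      matrixMutation ε k i j * mutationCoord ε X k i * mutationCoord ε X k j := by
  rw [logCanonicalBracket_eq_of_isLogGradient (isLogGradient_mutationCoord hD hX h1 i)
    (isLogGradient_mutationCoord hD hX h1 j), logCanonicalForm_mutationLogGradient hε]
  ring

theorem logCanonicalBracket_mutationCoord_eq_iff [CharZero F] (ε' : I → I → ℤ)
    (hε : ∀ a b, ε a b = -ε b a) (hD : ∀ a b, D a (X b) = if a = b then 1 else 0)
    (hX : ∀ i, X i ≠ 0) (h1 : 1 + X k ≠ 0) :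
    (∀ i j, logCanonicalBracket ε D X (mutationCoord ε X k i) (mutationCoord ε X k j) =
        ε' i j * mutationCoord ε X k i * mutationCoord ε X k j) ↔
      ∀ i j, ε' i j = matrixMutation ε k i j := by
  refine forall₂_congr fun i j => ?_
  rw [logCanonicalBracket_mutationCoord hε hD hX h1, mul_assoc, mul_assoc,
    mul_left_inj' (mul_ne_zero (mutationCoord_ne_zero hX h1 i) (mutationCoord_ne_zero hX h1 j)),
    Int.cast_inj, eq_comm]

end Mutation

theorem mutation_poisson_iff_cluster_rule_general
    {I : Type*} [Fintype I] [DecidableEq I]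
    (ε ε' : I → I → ℤ)
    (hε : ∀ a b, ε a b = -ε b a)
    (k : I)
    (D : I → Derivation ℝ (FractionRing (MvPolynomial I ℝ))
      (FractionRing (MvPolynomial I ℝ)))
    (hD : ∀ a b, D a (algebraMap (MvPolynomial I ℝ) (FractionRing (MvPolynomial I ℝ))
      (MvPolynomial.X b)) = if a = b then 1 else 0) :
    letI F := FractionRing (MvPolynomial I ℝ)
    letI Xv : I → F := fun i => algebraMap (MvPolynomial I ℝ) F (MvPolynomial.X i)
    letI bracket : F → F → F := fun f g =>
      ∑ a : I, ∑ b : I, (ε a b : F) * Xv a * Xv b * (D a f) * (D b g)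
    letI μ : I → F := fun i =>
      if i = k then (Xv k)⁻¹
      else if 0 < ε i k then Xv i * (1 + (Xv k)⁻¹) ^ (-(ε i k))
      else Xv i * (1 + Xv k) ^ (-(ε i k))
    ((∀ i j, bracket (μ i) (μ j) = (ε' i j : F) * μ i * μ j) ↔
      (∀ i j, ε' i j =
        if k = i ∨ k = j then -ε i j
        else ε i j + ε i k * max 0 ((ε i k).sign * ε k j))) := by
  have hinj := IsFractionRing.injective (MvPolynomial I ℝ) (FractionRing (MvPolynomial I ℝ))
  have hX (i : I) :
      algebraMap (MvPolynomial I ℝ) (FractionRing (MvPolynomial I ℝ)) (MvPolynomial.X i) ≠ 0 :=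
    (map_ne_zero_iff _ hinj).mpr (MvPolynomial.X_ne_zero i)
  have h1 : 1 + algebraMap (MvPolynomial I ℝ) (FractionRing (MvPolynomial I ℝ))
      (MvPolynomial.X k) ≠ 0 := by
    rw [← map_one (algebraMap (MvPolynomial I ℝ) _), ← map_add, map_ne_zero_iff _ hinj]
    intro h
    simpa using congrArg MvPolynomial.constantCoeff h
  exact logCanonicalBracket_mutationCoord_eq_iff (R := ℝ) ε' hε hD hX h1

/-- Let `I` be a finite set, `ε, ε' : I × I → ℤ` skew-symmetric, `k ∈ I`.  Work in the
field `F = ℝ(Xᵢ : i ∈ I)` of rational functions, with partial derivatives `∂ a` given by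
any family of derivations satisfying `∂ a (X b) = δ_{ab}`, and the Poisson bracket
`{f,g} = Σ_{a,b} ε_{ab} X_a X_b (∂ a f)(∂ b g)`.  Define the mutated coordinates
`μ_k(i)` by `μ_k(k) = X_k⁻¹`, `μ_k(i) = Xᵢ(1+X_k⁻¹)^{-ε_{ik}}` if `ε_{ik} > 0`, and
`μ_k(i) = Xᵢ(1+X_k)^{-ε_{ik}}` otherwise.  Then `{μ_k(i), μ_k(j)} = ε'_{ij} μ_k(i) μ_k(j)`
holds for all `i, j` if and only if `ε'` is obtained from `ε` by the cluster mutation rule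
in the direction `k`. -/
theorem mutation_poisson_iff_cluster_rule
    {I : Type*} [Fintype I] [DecidableEq I]
    (ε ε' : I → I → ℤ)
    (hε : ∀ a b, ε a b = -ε b a) (hε' : ∀ a b, ε' a b = -ε' b a)
    (k : I)
    (D : I → Derivation ℝ (FractionRing (MvPolynomial I ℝ))
      (FractionRing (MvPolynomial I ℝ)))
    (hD : ∀ a b, D a (algebraMap (MvPolynomial I ℝ) (FractionRing (MvPolynomial I ℝ))
      (MvPolynomial.X b)) = if a = b then 1 else 0) :
    letI F := FractionRing (MvPolynomial I ℝ)
    letI Xv : I → F := fun i => algebraMap (MvPolynomial I ℝ) F (MvPolynomial.X i)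
    letI bracket : F → F → F := fun f g =>
      ∑ a : I, ∑ b : I, (ε a b : F) * Xv a * Xv b * (D a f) * (D b g)
    letI μ : I → F := fun i =>
      if i = k then (Xv k)⁻¹
      else if 0 < ε i k then Xv i * (1 + (Xv k)⁻¹) ^ (-(ε i k))
      else Xv i * (1 + Xv k) ^ (-(ε i k))
    ((∀ i j, bracket (μ i) (μ j) = (ε' i j : F) * μ i * μ j) ↔
      (∀ i j, ε' i j =
        if k = i ∨ k = j then -ε i j
        else ε i j + ε i k * max 0 ((ε i k).sign * ε k j))) :=
  mutation_poisson_iff_cluster_rule_general ε ε' hε k D hD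
end

section
/- Define the flip map Φ : (ℝ_{>0})¹² → ℝ¹² on coordinates (A,B,C,D,E,F,G,H,X,Y,Z,W) by: A′=A(1+Z), D′=D·W/(1+W), E′=E(1+W), H′=H·Z/(1+Z), B′=B(1+Z+ZX+ZXW)/(1+Z), C′=C(1+W)XZ/(1+Z+ZX+ZXW), F′=F(1+W+WY+WYZ)/(1+W), G′=G(1+Z)YW/(1+W+WY+WYZ), X′=(1+Z)/(XZ(1+W)), Y′=(1+W)/(YW(1+Z)), Z′=X(1+W+WY+WYZ)/(1+Z+ZX+ZXW), W′=Y(1+Z+ZX+ZXW)/(1+W+WY+WYZ). Then Φ maps (ℝ_{>0})¹² into (ℝ_{>0})¹², and Φ is a bijection of (ℝ_{>0})¹² onto itself. -/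
set_option maxHeartbeats 2000000


/-- The flip map on the twelve coordinates `(A,B,C,D,E,F,G,H,X,Y,Z,W)` (indexed `0,…,11`). -/
noncomputable def flipMap (v : Fin 12 → ℝ) : Fin 12 → ℝ :=
  let A := v 0; let B := v 1; let C := v 2; let D := v 3
  let E := v 4; let F := v 5; let G := v 6; let H := v 7
  let X := v 8; let Y := v 9; let Z := v 10; let W := v 11
  ![A * (1 + Z),
    B * (1 + Z + Z * X + Z * X * W) / (1 + Z),
    C * (1 + W) * X * Z / (1 + Z + Z * X + Z * X * W),
    D * W / (1 + W),
    E * (1 + W),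
    F * (1 + W + W * Y + W * Y * Z) / (1 + W),
    G * (1 + Z) * Y * W / (1 + W + W * Y + W * Y * Z),
    H * Z / (1 + Z),
    (1 + Z) / (X * Z * (1 + W)),
    (1 + W) / (Y * W * (1 + Z)),
    X * (1 + W + W * Y + W * Y * Z) / (1 + Z + Z * X + Z * X * W),
    Y * (1 + Z + Z * X + Z * X * W) / (1 + W + W * Y + W * Y * Z)]

/-- The permutation of the twelve coordinates conjugating the flip to its inverse. -/
def flipSig : Fin 12 → Fin 12 := ![2, 3, 4, 5, 6, 7, 0, 1, 11, 10, 8, 9]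

/-- The inverse permutation of `flipSig`. -/
def flipTau : Fin 12 → Fin 12 := ![6, 7, 0, 1, 2, 3, 4, 5, 10, 11, 9, 8]

lemma flipSig_tau (j : Fin 12) : flipSig (flipTau j) = j := by revert j; decide

lemma flipTau_sig (j : Fin 12) : flipTau (flipSig j) = j := by revert j; decide

lemma flipMap_pos (v : Fin 12 → ℝ) (hv : ∀ i, 0 < v i) : ∀ i, 0 < flipMap v i := by
  have hA := hv 0; have hB := hv 1; have hC := hv 2; have hD := hv 3
  have hE := hv 4; have hF := hv 5; have hG := hv 6; have hH := hv 7
  have hX := hv 8; have hY := hv 9; have hZ := hv 10; have hW := hv 11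
  intro i
  fin_cases i
  · show 0 < v 0 * (1 + v 10)
    positivity
  · show 0 < v 1 * (1 + v 10 + v 10 * v 8 + v 10 * v 8 * v 11) / (1 + v 10)
    positivity
  · show 0 < v 2 * (1 + v 11) * v 8 * v 10 / (1 + v 10 + v 10 * v 8 + v 10 * v 8 * v 11)
    positivity
  · show 0 < v 3 * v 11 / (1 + v 11)
    positivity
  · show 0 < v 4 * (1 + v 11)
    positivity
  · show 0 < v 5 * (1 + v 11 + v 11 * v 9 + v 11 * v 9 * v 10) / (1 + v 11)
    positivity
  · show 0 < v 6 * (1 + v 10) * v 9 * v 11 / (1 + v 11 + v 11 * v 9 + v 11 * v 9 * v 10)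
    positivity
  · show 0 < v 7 * v 10 / (1 + v 10)
    positivity
  · show 0 < (1 + v 10) / (v 8 * v 10 * (1 + v 11))
    positivity
  · show 0 < (1 + v 11) / (v 9 * v 11 * (1 + v 10))
    positivity
  · show 0 < v 8 * (1 + v 11 + v 11 * v 9 + v 11 * v 9 * v 10) / (1 + v 10 + v 10 * v 8 + v 10 * v 8 * v 11)
    positivity
  · show 0 < v 9 * (1 + v 10 + v 10 * v 8 + v 10 * v 8 * v 11) / (1 + v 11 + v 11 * v 9 + v 11 * v 9 * v 10)
    positivity

lemma flipMap_key (v : Fin 12 → ℝ) (hv : ∀ i, 0 < v i) (i : Fin 12) :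
    flipMap (fun j => flipMap v (flipSig j)) i = v (flipSig i) := by
  have hX := hv 8; have hY := hv 9; have hZ := hv 10; have hW := hv 11
  have h1Z : (0:ℝ) < 1 + v 10 := by linarith
  have h1W : (0:ℝ) < 1 + v 11 := by linarith
  have hP : (0:ℝ) < 1 + v 10 + v 10 * v 8 + v 10 * v 8 * v 11 := by positivity
  have hQ : (0:ℝ) < 1 + v 11 + v 11 * v 9 + v 11 * v 9 * v 10 := by positivity
  have hN1 : (0:ℝ) < v 8 * v 10 * v 11 * (1 + v 11) * (1 + v 11 + v 11 * v 9 + v 11 * v 9 * v 10) + v 11 * (1 + v 10) * (1 + v 11 + v 11 * v 9 + v 11 * v 9 * v 10) + v 11 * v 9 * (1 + v 10) * (1 + v 10 + v 10 * v 8 + v 10 * v 8 * v 11) + (1 + v 11) * (1 + v 10 + v 10 * v 8 + v 10 * v 8 * v 11) := by positivity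
  have hN2 : (0:ℝ) < v 9 * v 11 * v 10 * (1 + v 10) * (1 + v 10 + v 10 * v 8 + v 10 * v 8 * v 11) + v 10 * (1 + v 11) * (1 + v 10 + v 10 * v 8 + v 10 * v 8 * v 11) + v 10 * v 8 * (1 + v 11) * (1 + v 11 + v 11 * v 9 + v 11 * v 9 * v 10) + (1 + v 10) * (1 + v 11 + v 11 * v 9 + v 11 * v 9 * v 10) := by positivity
  have hX' := hX.ne'; have hY' := hY.ne'; have hZ' := hZ.ne'; have hW' := hW.ne'
  have h1Z' := h1Z.ne'; have h1W' := h1W.ne'; have hP' := hP.ne'; have hQ' := hQ.ne'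
  have hN1' := hN1.ne'; have hN2' := hN2.ne'
  have e8 : 1 + ((1 + v 10) / (v 8 * v 10 * (1 + v 11))) = (1 + v 10 + v 10 * v 8 + v 10 * v 8 * v 11) / (v 8 * v 10 * (1 + v 11)) := by
    field_simp
    try ring
  have e9 : 1 + ((1 + v 11) / (v 9 * v 11 * (1 + v 10))) = (1 + v 11 + v 11 * v 9 + v 11 * v 9 * v 10) / (v 9 * v 11 * (1 + v 10)) := by
    field_simp
    try ring
  have eS1 : 1 + ((1 + v 10) / (v 8 * v 10 * (1 + v 11))) + ((1 + v 10) / (v 8 * v 10 * (1 + v 11))) * (v 9 * (1 + v 10 + v 10 * v 8 + v 10 * v 8 * v 11) / (1 + v 11 + v 11 * v 9 + v 11 * v 9 * v 10)) + ((1 + v 10) / (v 8 * v 10 * (1 + v 11))) * (v 9 * (1 + v 10 + v 10 * v 8 + v 10 * v 8 * v 11) / (1 + v 11 + v 11 * v 9 + v 11 * v 9 * v 10)) * ((1 + v 11) / (v 9 * v 11 * (1 + v 10))) =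
      (v 8 * v 10 * v 11 * (1 + v 11) * (1 + v 11 + v 11 * v 9 + v 11 * v 9 * v 10) + v 11 * (1 + v 10) * (1 + v 11 + v 11 * v 9 + v 11 * v 9 * v 10) + v 11 * v 9 * (1 + v 10) * (1 + v 10 + v 10 * v 8 + v 10 * v 8 * v 11) + (1 + v 11) * (1 + v 10 + v 10 * v 8 + v 10 * v 8 * v 11)) / (v 8 * v 10 * v 11 * (1 + v 11) * (1 + v 11 + v 11 * v 9 + v 11 * v 9 * v 10)) := by
    field_simp
    try ring
  have eS2 : 1 + ((1 + v 11) / (v 9 * v 11 * (1 + v 10))) + ((1 + v 11) / (v 9 * v 11 * (1 + v 10))) * (v 8 * (1 + v 11 + v 11 * v 9 + v 11 * v 9 * v 10) / (1 + v 10 + v 10 * v 8 + v 10 * v 8 * v 11)) + ((1 + v 11) / (v 9 * v 11 * (1 + v 10))) * (v 8 * (1 + v 11 + v 11 * v 9 + v 11 * v 9 * v 10) / (1 + v 10 + v 10 * v 8 + v 10 * v 8 * v 11)) * ((1 + v 10) / (v 8 * v 10 * (1 + v 11))) =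
      (v 9 * v 11 * v 10 * (1 + v 10) * (1 + v 10 + v 10 * v 8 + v 10 * v 8 * v 11) + v 10 * (1 + v 11) * (1 + v 10 + v 10 * v 8 + v 10 * v 8 * v 11) + v 10 * v 8 * (1 + v 11) * (1 + v 11 + v 11 * v 9 + v 11 * v 9 * v 10) + (1 + v 10) * (1 + v 11 + v 11 * v 9 + v 11 * v 9 * v 10)) / (v 9 * v 11 * v 10 * (1 + v 10) * (1 + v 10 + v 10 * v 8 + v 10 * v 8 * v 11)) := by
    field_simp
    try ring
  fin_cases i
  · show (v 2 * (1 + v 11) * v 8 * v 10 / (1 + v 10 + v 10 * v 8 + v 10 * v 8 * v 11)) * (1 + ((1 + v 10) / (v 8 * v 10 * (1 + v 11)))) = v 2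
    try simp only [eS1, eS2]
    try simp only [e8, e9]
    field_simp
    try ring
  · show (v 3 * v 11 / (1 + v 11)) * (1 + ((1 + v 10) / (v 8 * v 10 * (1 + v 11))) + ((1 + v 10) / (v 8 * v 10 * (1 + v 11))) * (v 9 * (1 + v 10 + v 10 * v 8 + v 10 * v 8 * v 11) / (1 + v 11 + v 11 * v 9 + v 11 * v 9 * v 10)) + ((1 + v 10) / (v 8 * v 10 * (1 + v 11))) * (v 9 * (1 + v 10 + v 10 * v 8 + v 10 * v 8 * v 11) / (1 + v 11 + v 11 * v 9 + v 11 * v 9 * v 10)) * ((1 + v 11) / (v 9 * v 11 * (1 + v 10)))) / (1 + ((1 + v 10) / (v 8 * v 10 * (1 + v 11)))) = v 3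
    try simp only [eS1, eS2]
    try simp only [e8, e9]
    field_simp
    try ring
  · show (v 4 * (1 + v 11)) * (1 + ((1 + v 11) / (v 9 * v 11 * (1 + v 10)))) * (v 9 * (1 + v 10 + v 10 * v 8 + v 10 * v 8 * v 11) / (1 + v 11 + v 11 * v 9 + v 11 * v 9 * v 10)) * ((1 + v 10) / (v 8 * v 10 * (1 + v 11))) / (1 + ((1 + v 10) / (v 8 * v 10 * (1 + v 11))) + ((1 + v 10) / (v 8 * v 10 * (1 + v 11))) * (v 9 * (1 + v 10 + v 10 * v 8 + v 10 * v 8 * v 11) / (1 + v 11 + v 11 * v 9 + v 11 * v 9 * v 10)) + ((1 + v 10) / (v 8 * v 10 * (1 + v 11))) * (v 9 * (1 + v 10 + v 10 * v 8 + v 10 * v 8 * v 11) / (1 + v 11 + v 11 * v 9 + v 11 * v 9 * v 10)) * ((1 + v 11) / (v 9 * v 11 * (1 + v 10)))) = v 4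
    try simp only [eS1, eS2]
    try simp only [e8, e9]
    field_simp
    try ring
  · show (v 5 * (1 + v 11 + v 11 * v 9 + v 11 * v 9 * v 10) / (1 + v 11)) * ((1 + v 11) / (v 9 * v 11 * (1 + v 10))) / (1 + ((1 + v 11) / (v 9 * v 11 * (1 + v 10)))) = v 5
    try simp only [eS1, eS2]
    try simp only [e8, e9]
    field_simp
    try ring
  · show (v 6 * (1 + v 10) * v 9 * v 11 / (1 + v 11 + v 11 * v 9 + v 11 * v 9 * v 10)) * (1 + ((1 + v 11) / (v 9 * v 11 * (1 + v 10)))) = v 6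
    try simp only [eS1, eS2]
    try simp only [e8, e9]
    field_simp
    try ring
  · show (v 7 * v 10 / (1 + v 10)) * (1 + ((1 + v 11) / (v 9 * v 11 * (1 + v 10))) + ((1 + v 11) / (v 9 * v 11 * (1 + v 10))) * (v 8 * (1 + v 11 + v 11 * v 9 + v 11 * v 9 * v 10) / (1 + v 10 + v 10 * v 8 + v 10 * v 8 * v 11)) + ((1 + v 11) / (v 9 * v 11 * (1 + v 10))) * (v 8 * (1 + v 11 + v 11 * v 9 + v 11 * v 9 * v 10) / (1 + v 10 + v 10 * v 8 + v 10 * v 8 * v 11)) * ((1 + v 10) / (v 8 * v 10 * (1 + v 11)))) / (1 + ((1 + v 11) / (v 9 * v 11 * (1 + v 10)))) = v 7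
    try simp only [eS1, eS2]
    try simp only [e8, e9]
    field_simp
    try ring
  · show (v 0 * (1 + v 10)) * (1 + ((1 + v 10) / (v 8 * v 10 * (1 + v 11)))) * (v 8 * (1 + v 11 + v 11 * v 9 + v 11 * v 9 * v 10) / (1 + v 10 + v 10 * v 8 + v 10 * v 8 * v 11)) * ((1 + v 11) / (v 9 * v 11 * (1 + v 10))) / (1 + ((1 + v 11) / (v 9 * v 11 * (1 + v 10))) + ((1 + v 11) / (v 9 * v 11 * (1 + v 10))) * (v 8 * (1 + v 11 + v 11 * v 9 + v 11 * v 9 * v 10) / (1 + v 10 + v 10 * v 8 + v 10 * v 8 * v 11)) + ((1 + v 11) / (v 9 * v 11 * (1 + v 10))) * (v 8 * (1 + v 11 + v 11 * v 9 + v 11 * v 9 * v 10) / (1 + v 10 + v 10 * v 8 + v 10 * v 8 * v 11)) * ((1 + v 10) / (v 8 * v 10 * (1 + v 11)))) = v 0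
    try simp only [eS1, eS2]
    try simp only [e8, e9]
    field_simp
    try ring
  · show (v 1 * (1 + v 10 + v 10 * v 8 + v 10 * v 8 * v 11) / (1 + v 10)) * ((1 + v 10) / (v 8 * v 10 * (1 + v 11))) / (1 + ((1 + v 10) / (v 8 * v 10 * (1 + v 11)))) = v 1
    try simp only [eS1, eS2]
    try simp only [e8, e9]
    field_simp
    try ring
  · show (1 + ((1 + v 10) / (v 8 * v 10 * (1 + v 11)))) / ((v 9 * (1 + v 10 + v 10 * v 8 + v 10 * v 8 * v 11) / (1 + v 11 + v 11 * v 9 + v 11 * v 9 * v 10)) * ((1 + v 10) / (v 8 * v 10 * (1 + v 11))) * (1 + ((1 + v 11) / (v 9 * v 11 * (1 + v 10))))) = v 11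
    try simp only [eS1, eS2]
    try simp only [e8, e9]
    field_simp
    try ring
  · show (1 + ((1 + v 11) / (v 9 * v 11 * (1 + v 10)))) / ((v 8 * (1 + v 11 + v 11 * v 9 + v 11 * v 9 * v 10) / (1 + v 10 + v 10 * v 8 + v 10 * v 8 * v 11)) * ((1 + v 11) / (v 9 * v 11 * (1 + v 10))) * (1 + ((1 + v 10) / (v 8 * v 10 * (1 + v 11))))) = v 10
    try simp only [eS1, eS2]
    try simp only [e8, e9]
    field_simp
    try ring
  · show (v 9 * (1 + v 10 + v 10 * v 8 + v 10 * v 8 * v 11) / (1 + v 11 + v 11 * v 9 + v 11 * v 9 * v 10)) * (1 + ((1 + v 11) / (v 9 * v 11 * (1 + v 10))) + ((1 + v 11) / (v 9 * v 11 * (1 + v 10))) * (v 8 * (1 + v 11 + v 11 * v 9 + v 11 * v 9 * v 10) / (1 + v 10 + v 10 * v 8 + v 10 * v 8 * v 11)) + ((1 + v 11) / (v 9 * v 11 * (1 + v 10))) * (v 8 * (1 + v 11 + v 11 * v 9 + v 11 * v 9 * v 10) / (1 + v 10 + v 10 * v 8 + v 10 * v 8 * v 11)) * ((1 + v 10) /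 (v 8 * v 10 * (1 + v 11)))) / (1 + ((1 + v 10) / (v 8 * v 10 * (1 + v 11))) + ((1 + v 10) / (v 8 * v 10 * (1 + v 11))) * (v 9 * (1 + v 10 + v 10 * v 8 + v 10 * v 8 * v 11) / (1 + v 11 + v 11 * v 9 + v 11 * v 9 * v 10)) + ((1 + v 10) / (v 8 * v 10 * (1 + v 11))) * (v 9 * (1 + v 10 + v 10 * v 8 + v 10 * v 8 * v 11) / (1 + v 11 + v 11 * v 9 + v 11 * v 9 * v 10)) * ((1 + v 11) / (v 9 * v 11 * (1 + v 10)))) = v 8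
    try simp only [eS1, eS2]
    try simp only [e8, e9]
    field_simp
    try ring
  · show (v 8 * (1 + v 11 + v 11 * v 9 + v 11 * v 9 * v 10) / (1 + v 10 + v 10 * v 8 + v 10 * v 8 * v 11)) * (1 + ((1 + v 10) / (v 8 * v 10 * (1 + v 11))) + ((1 + v 10) / (v 8 * v 10 * (1 + v 11))) * (v 9 * (1 + v 10 + v 10 * v 8 + v 10 * v 8 * v 11) / (1 + v 11 + v 11 * v 9 + v 11 * v 9 * v 10)) + ((1 + v 10) / (v 8 * v 10 * (1 + v 11))) * (v 9 * (1 + v 10 + v 10 * v 8 + v 10 * v 8 * v 11) / (1 + v 11 + v 11 * v 9 + v 11 * v 9 * v 10)) * ((1 + v 11) / (v 9 * v 11 * (1 + v 10)))) / (1 + ((1 + v 11) / (v 9 * v 11 * (1 + v 10))) + ((1 + v 11) / (v 9 * v 11 * (1 + v 10))) * (v 8 * (1 + v 11 + v 11 * v 9 + v 11 * v 9 * v 10) / (1 + v 10 + v 10 * v 8 + v 10 * v 8 * v 11)) + ((1 + v 11) / (v 9 * v 11 * (1 + v 10))) * (v 8 * (1 + v 11 + v 11 * v 9 + v 11 * v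 9 * v 10) / (1 + v 10 + v 10 * v 8 + v 10 * v 8 * v 11)) * ((1 + v 10) / (v 8 * v 10 * (1 + v 11)))) = v 9
    try simp only [eS1, eS2]
    try simp only [e8, e9]
    field_simp
    try ring

/-- The flip map sends the positive orthant `(ℝ_{>0})¹²` into itself, and is a bijection
of the positive orthant onto itself. -/
theorem flipMap_bijOn_positive :
    (∀ v : Fin 12 → ℝ, (∀ i, 0 < v i) → ∀ i, 0 < flipMap v i) ∧
    Set.BijOn flipMap {v : Fin 12 → ℝ | ∀ i, 0 < v i} {v : Fin 12 → ℝ | ∀ i, 0 < v i} := by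
  refine ⟨flipMap_pos, ?_, ?_, ?_⟩
  · intro v hv
    exact flipMap_pos v hv
  · -- injectivity
    intro a ha b hb hab
    funext j
    have h1 := flipMap_key a ha (flipTau j)
    have h2 := flipMap_key b hb (flipTau j)
    rw [flipSig_tau] at h1 h2
    rw [← h1, ← h2, hab]
  · -- surjectivity
    intro w hw
    refine ⟨fun j => flipMap (fun i => w (flipTau i)) (flipSig j), ?_, ?_⟩
    · intro i
      exact flipMap_pos (fun i => w (flipTau i)) (fun i => hw (flipTau i)) (flipSig i)
    · funext i
      have h := flipMap_key (fun i => w (flipTau i)) (fun i => hw (flipTau i)) i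
      rw [h, flipTau_sig]
end
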